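/- Let D ⊆ 2^{<ω} be a prefix-free set of nonempty binary strings with Σ_{σ∈D} 2^{-|σ|} = 1. Then λ-almost every X ∈ 2^ω admits a (necessarily unique) infinite decomposition X = σ₁⌢σ₂⌢σ₃⌢⋯ with every σ_i ∈ D. -/
import Mathlib


open Filter MeasureTheory

/-- The length-`n` initial segment of `X ∈ 2^ω`, as a finite binary string. -/
def seg (X : ℕ → Bool) (n : ℕ) : List Bool := (List.range n).map X

/-- The cylinder `⟦σ⟧` of all sequences extending the string `σ`. -/
def cyl (σ : List Bool) : Set (ℕ → Bool) := {X | seg X σ.length = σ}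

/-- `D ⊆ 2^{<ω}` is prefix-free: no element is a proper initial segment of another. -/
def PrefixFree (D : Set (List Bool)) : Prop :=
  ∀ σ ∈ D, ∀ τ ∈ D, σ <+: τ → σ = τ

@[simp] lemma seg_length (X : ℕ → Bool) (n : ℕ) : (seg X n).length = n := by
  simp [seg]

lemma seg_prefix (X : ℕ → Bool) {m n : ℕ} (h : m ≤ n) : seg X m <+: seg X n := by
  have : seg X m = (seg X n).take m := by
    simp [seg, ← List.map_take, List.take_range, Nat.min_eq_left h]
  rw [this]; exact List.take_prefix _ _

lemma mem_cyl {X : ℕ → Bool} {σ : List Bool} : X ∈ cyl σ ↔ seg X σ.length = σ := Iff.rfl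

lemma prefix_seg {X : ℕ → Bool} {σ : List Bool} {n : ℕ} (h : σ <+: seg X n) :
    X ∈ cyl σ := by
  have hl : σ.length ≤ n := by simpa using h.length_le
  have h2 := seg_prefix X hl
  rcases List.prefix_or_prefix_of_prefix h2 h with h3 | h3
  · exact h3.eq_of_length (by simp)
  · exact (h3.eq_of_length (by simp)).symm

lemma cyl_comparable {X : ℕ → Bool} {σ τ : List Bool} (h1 : X ∈ cyl σ) (h2 : X ∈ cyl τ) :
    σ <+: τ ∨ τ <+: σ := by
  rcases le_total σ.length τ.length with h | h
  · left; rw [← h1, ← h2]; exact seg_prefix X h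
  · right; rw [← h1, ← h2]; exact seg_prefix X h

lemma segD (X : ℕ → Bool) {n i : ℕ} (h : i < n) : (seg X n).getD i false = X i := by
  rw [List.getD_eq_getElem _ _ (by simpa using h)]; simp [seg]

lemma measurableSet_cyl (σ : List Bool) : MeasurableSet (cyl σ) := by
  have : cyl σ = ⋂ i ∈ Finset.range σ.length, {X : ℕ → Bool | X i = σ.getD i false} := by
    ext X
    simp only [mem_cyl, Set.mem_iInter, Set.mem_setOf_eq, Finset.mem_range]
    constructor
    · intro h i hi
      rw [← h, segD X (by simpa using hi)]
    · intro h
      apply List.ext_getElem (by simp)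
      intro i h1 h2
      have := h i (by simpa using h1)
      rw [← List.getD_eq_getElem σ false h2, ← this, ← segD X (i := i) (by simpa using h1)]
      rw [List.getD_eq_getElem _ _ h1]
  rw [this]
  exact MeasurableSet.biInter (Finset.range σ.length).countable_toSet fun i _ =>
    (measurable_pi_apply i) (MeasurableSet.singleton _)

/-- Strings that are concatenations of `k` elements of `D`. -/
def Dk (D : Set (List Bool)) : ℕ → Set (List Bool)
  | 0 => {[]}
  | k+1 => {ρ | ∃ τ ∈ Dk D k, ∃ σ ∈ D, ρ = τ ++ σ}

lemma Dk_prefixFree {D : Set (List Bool)} (hpf : PrefixFree D) (k : ℕ) :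
    PrefixFree (Dk D k) := by
  induction k with
  | zero =>
    intro σ hσ τ hτ _
    simp only [Dk, Set.mem_singleton_iff] at hσ hτ
    rw [hσ, hτ]
  | succ k ih =>
    rintro _ ⟨τ₁, hτ₁, σ₁, hσ₁, rfl⟩ _ ⟨τ₂, hτ₂, σ₂, hσ₂, rfl⟩ hp
    have hτ : τ₁ = τ₂ := by
      have h1 : τ₁ <+: τ₂ ++ σ₂ := (List.prefix_append τ₁ σ₁).trans hp
      have h2 : τ₂ <+: τ₂ ++ σ₂ := List.prefix_append τ₂ σ₂
      rcases List.prefix_or_prefix_of_prefix h1 h2 with h | h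
      · exact ih _ hτ₁ _ hτ₂ h
      · exact (ih _ hτ₂ _ hτ₁ h).symm
    subst hτ
    rw [List.prefix_append_right_inj] at hp
    rw [hpf _ hσ₁ _ hσ₂ hp]

lemma flatten_succ (B : ℕ → List Bool) (k : ℕ) :
    ((List.range (k+1)).map B).flatten = ((List.range k).map B).flatten ++ B k := by
  simp [List.range_succ]

/-- Let `D` be a prefix-free set of nonempty binary strings with
`Σ_{σ∈D} 2^{-|σ|} = 1`, and let `λ` be the uniform measure on `2^ω`.  Then
`λ`-almost every `X` admits a unique infinite decomposition
`X = σ₁⌢σ₂⌢⋯` with all `σᵢ ∈ D` (the blocks `B i = σ_{i+1}`, each finite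
concatenation being an initial segment of `X`). -/
theorem stmt10 (D : Set (List Bool))
    (hne : ∀ σ ∈ D, σ ≠ ([] : List Bool))
    (hpf : PrefixFree D)
    (hsum : ∑' σ : D, ((1 : ℝ) / 2) ^ (σ : List Bool).length = 1)
    (lam : Measure (ℕ → Bool)) [IsProbabilityMeasure lam]
    (hlam : ∀ σ : List Bool, lam (cyl σ) = (1 / 2 : ENNReal) ^ σ.length) :
    ∀ᵐ X ∂lam, ∃! B : ℕ → List Bool,
      (∀ i, B i ∈ D) ∧
      ∀ k : ℕ, seg X (((List.range k).map B).flatten).length =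
        ((List.range k).map B).flatten := by
  classical
  -- the ENNReal version of hsum
  have hsummable : Summable fun σ : D => ((1 : ℝ) / 2) ^ (σ : List Bool).length := by
    by_contra h
    rw [tsum_eq_zero_of_not_summable h] at hsum
    norm_num at hsum
  have hsumE : ∑' σ : D, ((1 : ENNReal) / 2) ^ (σ : List Bool).length = 1 := by
    have key : ∀ σ : D, ((1 : ENNReal) / 2) ^ (σ : List Bool).length
        = ENNReal.ofReal (((1 : ℝ) / 2) ^ (σ : List Bool).length) := by
      intro σ
      rw [ENNReal.ofReal_pow (by norm_num),
        ENNReal.ofReal_div_of_pos (by norm_num), ENNReal.ofReal_one, ENNReal.ofReal_ofNat]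
    rw [funext key, ← ENNReal.ofReal_tsum_of_nonneg (fun σ => by positivity) hsummable,
      hsum, ENNReal.ofReal_one]
  -- measure of each Ek is 1
  have hEk : ∀ k, lam (⋃ ρ : Dk D k, cyl (ρ : List Bool)) = 1 := by
    have hdisj : ∀ k, Pairwise (Function.onFun Disjoint
        fun ρ : Dk D k => cyl (ρ : List Bool)) := by
      intro k ρ₁ ρ₂ hne12
      apply Set.disjoint_left.2
      intro X h1 h2
      apply hne12
      apply Subtype.ext
      rcases cyl_comparable h1 h2 with h | h
      · exact Dk_prefixFree hpf k _ ρ₁.2 _ ρ₂.2 h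
      · exact (Dk_prefixFree hpf k _ ρ₂.2 _ ρ₁.2 h).symm
    have hmeas : ∀ k, lam (⋃ ρ : Dk D k, cyl (ρ : List Bool))
        = ∑' ρ : Dk D k, ((1 : ENNReal) / 2) ^ (ρ : List Bool).length := by
      intro k
      rw [measure_iUnion (hdisj k) fun ρ => measurableSet_cyl _]
      exact tsum_congr fun ρ => hlam _
    intro k
    rw [hmeas]
    induction k with
    | zero =>
      have key : ∀ ρ : Dk D 0, ((1 : ENNReal) / 2) ^ (ρ : List Bool).length = 1 := by
        rintro ⟨ρ, hρ⟩
        simp only [Dk, Set.mem_singleton_iff] at hρ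
        subst hρ; simp
      rw [funext key]
      have hu : Unique (Dk D 0) := ⟨⟨⟨[], rfl⟩⟩, by rintro ⟨ρ, hρ⟩; exact Subtype.ext hρ⟩
      exact tsum_eq_single hu.default (fun b hb => absurd (hu.uniq b) hb)
    | succ k ih =>
      -- bijection (Dk D k) × D ≃ Dk D (k+1)
      have hinj : Function.Injective (fun p : Dk D k × D =>
          (⟨(p.1 : List Bool) ++ (p.2 : List Bool),
            ⟨p.1, p.1.2, p.2, p.2.2, rfl⟩⟩ : Dk D (k+1))) := by
        rintro ⟨τ₁, σ₁⟩ ⟨τ₂, σ₂⟩ h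
        have h' : (τ₁ : List Bool) ++ σ₁ = (τ₂ : List Bool) ++ σ₂ :=
          congrArg Subtype.val h
        have hτ : (τ₁ : List Bool) = τ₂ := by
          have h1 : (τ₁ : List Bool) <+: (τ₂ : List Bool) ++ σ₂ :=
            h' ▸ List.prefix_append _ _
          rcases List.prefix_or_prefix_of_prefix h1 (List.prefix_append _ _) with h | h
          · exact Dk_prefixFree hpf k _ τ₁.2 _ τ₂.2 h
          · exact (Dk_prefixFree hpf k _ τ₂.2 _ τ₁.2 h).symm
        have hσ : (σ₁ : List Bool) = σ₂ := by
          rw [hτ] at h'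
          exact List.append_cancel_left h'
        exact Prod.ext (Subtype.ext hτ) (Subtype.ext hσ)
      have hsurj : Function.Surjective (fun p : Dk D k × D =>
          (⟨(p.1 : List Bool) ++ (p.2 : List Bool),
            ⟨p.1, p.1.2, p.2, p.2.2, rfl⟩⟩ : Dk D (k+1))) := by
        rintro ⟨ρ, τ, hτ, σ, hσ, rfl⟩
        exact ⟨(⟨τ, hτ⟩, ⟨σ, hσ⟩), rfl⟩
      have h2 : ∑' p : Dk D k × D,
          ((1 : ENNReal) / 2) ^ (p.1 : List Bool).length *
            ((1 : ENNReal) / 2) ^ (p.2 : List Bool).length = 1 := by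
        rw [ENNReal.tsum_prod (f := fun (a : Dk D k) (b : D) =>
          ((1 : ENNReal) / 2) ^ (a : List Bool).length *
          ((1 : ENNReal) / 2) ^ (b : List Bool).length)]
        simp only [ENNReal.tsum_mul_left, hsumE, mul_one]
        exact ih
      rw [← Function.Injective.tsum_eq hinj (fun x _ => hsurj x)]
      simp only [List.length_append, pow_add]
      exact h2
  -- the a.e. set
  have hAc : lam (⋂ k, ⋃ ρ : Dk D k, cyl (ρ : List Bool))ᶜ = 0 := by
    rw [Set.compl_iInter]
    refine measure_iUnion_null fun k => ?_
    exact (prob_compl_eq_zero_iff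
      (MeasurableSet.iUnion fun ρ => measurableSet_cyl _)).2 (hEk k)
  rw [ae_iff]
  refine measure_mono_null ?_ hAc
  intro X hX hXA
  apply hX
  -- now X ∈ ⋂ k, ⋃ ρ, cyl ρ ; prove the unique decomposition
  simp only [Set.mem_iInter] at hXA
  -- choose, for each k, a decomposition of length k+1
  have h1 : ∀ k, ∃ τ, τ ∈ Dk D k ∧ ∃ σ, σ ∈ D ∧ X ∈ cyl (τ ++ σ) := by
    intro k
    obtain ⟨ρ, hρ⟩ := Set.mem_iUnion.1 (hXA (k+1))
    obtain ⟨τ, hτ, σ, hσ, hρ'⟩ := ρ.2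
    exact ⟨τ, hτ, σ, hσ, by rwa [hρ'] at hρ⟩
  choose τ hτ σ hσ hcyl using h1
  -- uniqueness of Dk-prefixes of X
  have hU : ∀ k (ρ₁ ρ₂ : List Bool), ρ₁ ∈ Dk D k → ρ₂ ∈ Dk D k →
      X ∈ cyl ρ₁ → X ∈ cyl ρ₂ → ρ₁ = ρ₂ := by
    intro k ρ₁ ρ₂ hρ₁ hρ₂ h1 h2
    rcases cyl_comparable h1 h2 with h | h
    · exact Dk_prefixFree hpf k _ hρ₁ _ hρ₂ h
    · exact (Dk_prefixFree hpf k _ hρ₂ _ hρ₁ h).symm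
  have Xcylτ : ∀ k, X ∈ cyl (τ k) := by
    intro k
    refine prefix_seg (n := (τ k ++ σ k).length) ?_
    rw [mem_cyl.1 (hcyl k)]
    exact List.prefix_append _ _
  -- the chosen blocks decompose X
  have claimC : ∀ k, ((List.range k).map σ).flatten = τ k := by
    intro k
    induction k with
    | zero => exact (Set.mem_singleton_iff.1 (hτ 0)).symm
    | succ k ih =>
      rw [flatten_succ, ih]
      exact hU (k+1) _ _ ⟨τ k, hτ k, σ k, hσ k, rfl⟩ (hτ (k+1)) (hcyl k) (Xcylτ (k+1))
  refine ⟨σ, ⟨hσ, fun k => by rw [claimC k]; exact mem_cyl.1 (Xcylτ k)⟩, ?_⟩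
  -- uniqueness
  rintro B' ⟨hB'D, hB'⟩
  have propσ : ∀ k, seg X (((List.range k).map σ).flatten).length
      = ((List.range k).map σ).flatten := fun k => by
    rw [claimC k]; exact mem_cyl.1 (Xcylτ k)
  have hFeq : ∀ k, ((List.range k).map B').flatten = ((List.range k).map σ).flatten := by
    intro k
    induction k with
    | zero => rfl
    | succ k ih =>
      rw [flatten_succ, flatten_succ, ih]
      congr 1
      have h1 : X ∈ cyl (((List.range k).map σ).flatten ++ B' k) := by
        rw [mem_cyl, ← ih, ← flatten_succ]
        exact hB' (k+1)
      have h2 : X ∈ cyl (((List.range k).map σ).flatten ++ σ k) := by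
        rw [mem_cyl, ← flatten_succ]
        exact propσ (k+1)
      rcases cyl_comparable h1 h2 with h | h <;>
        rw [List.prefix_append_right_inj] at h
      · exact hpf _ (hB'D k) _ (hσ k) h
      · exact (hpf _ (hσ k) _ (hB'D k) h).symm
  funext k
  have := hFeq (k+1)
  rw [flatten_succ, flatten_succ, hFeq k] at this
  exact List.append_cancel_left this
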